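/- arXiv:1812.00731 — 6 statements merged into one kernel-verified Lean document; each statement's English description precedes it below -/
import Mathlib

section
/- The function d_E(u,v) = ‖u ∧ v‖ / (‖u‖·‖v‖) on the complex projective plane, where ‖u ∧ v‖ is the norm induced by the Hermitian inner product on the second exterior power of ℂ³, satisfies the triangle inequality: d_E(u,w) ≤ d_E(u,v) + d_E(v,w) for all nonzero u, v, w ∈ ℂ³. -/
/-!
Identify `ℂ³` with `EuclideanSpace ℂ (Fin 3)` and let `P_v` be the orthogonal projection onto
the line `ℂ v`. By Lagrange's identity `‖u ∧ v‖ = ‖u - P_v u‖ ‖v‖`, so for `v ≠ 0`,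
`d_E(u, v) = ‖u - P_v u‖ / ‖u‖` is the sine of the angle between `u` and the line `ℂ v`.
Write `P_v u = a v`, so that `‖a‖ ‖v‖ ≤ ‖u‖`. The vector `a P_w v` lies on `ℂ w` and
`u - a P_w v = (u - P_v u) + a (v - P_w v)`, so minimality of `P_w` gives
`‖u - P_w u‖ ≤ ‖u - P_v u‖ + ‖a‖ ‖v - P_w v‖`; dividing by `‖u‖` gives the triangle inequality.
-/

open scoped ComplexConjugate

/-- Standard Hermitian inner product on ℂ³ : `u · v = ∑ uᵢ conj(vᵢ)`. -/
noncomputable def cdot (u v : Fin 3 → ℂ) : ℂ := ∑ i, u i * conj (v i)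

/-- Hermitian norm on ℂ³. -/
noncomputable def hnorm (u : Fin 3 → ℂ) : ℝ := Real.sqrt (cdot u u).re

/-- Squared norm of `u ∧ v` in Λ²ℂ³ for the induced Hermitian product:
`(u∧v)·(u∧v) = (u·u)(v·v) − (u·v)(v·u)`. -/
noncomputable def wedgeSq (u v : Fin 3 → ℂ) : ℝ :=
  (cdot u u * cdot v v - cdot u v * cdot v u).re

/-- Norm of `u ∧ v`. -/
noncomputable def wedgeNorm (u v : Fin 3 → ℂ) : ℝ := Real.sqrt (wedgeSq u v)

/-- The distance `d_E(u,v) = ‖u ∧ v‖ / (‖u‖ ‖v‖)` on the projective plane. -/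
noncomputable def dE (u v : Fin 3 → ℂ) : ℝ := wedgeNorm u v / (hnorm u * hnorm v)

open scoped InnerProductSpace

section
variable {𝕜 E : Type*} [RCLike 𝕜] [NormedAddCommGroup E] [InnerProductSpace 𝕜 E]

theorem Submodule.norm_sub_starProjection_le (K : Submodule 𝕜 E) [K.HasOrthogonalProjection]
    (x : E) {y : E} (hy : y ∈ K) : ‖x - K.starProjection x‖ ≤ ‖x - y‖ := by
  rw [starProjection_minimal]
  exact ciInf_le ⟨0, Set.forall_mem_range.mpr fun _ => norm_nonneg _⟩ (⟨y, hy⟩ : K)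

theorem norm_starProjection_singleton_mul_norm (x y : E) :
    ‖(𝕜 ∙ y).starProjection x‖ * ‖y‖ = ‖⟪y, x⟫_𝕜‖ := by
  rcases eq_or_ne y 0 with rfl | hy
  · simp
  have h := congrArg norm (Submodule.smul_starProjection_singleton 𝕜 (v := y) x)
  simp only [norm_smul, RCLike.norm_ofReal, abs_pow, abs_norm] at h
  exact mul_left_cancel₀ (norm_ne_zero_iff.mpr hy) (by linear_combination h)

theorem norm_sub_starProjection_singleton_mul_norm_eq_sqrt (x y : E) :
    ‖x - (𝕜 ∙ y).starProjection x‖ * ‖y‖ = √(‖x‖ ^ 2 * ‖y‖ ^ 2 - ‖⟪y, x⟫_𝕜‖ ^ 2) := by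
  have h := (𝕜 ∙ y).norm_sq_eq_add_norm_sq_starProjection x
  rw [Submodule.starProjection_orthogonal_val] at h
  rw [← norm_starProjection_singleton_mul_norm, h,
    show ∀ a b c : ℝ, (a ^ 2 + b ^ 2) * c ^ 2 - (a * c) ^ 2 = (b * c) ^ 2 by intros; ring,
    Real.sqrt_sq (by positivity)]

theorem norm_sub_starProjection_singleton_mul_norm_le (x y z : E) :
    ‖x - (𝕜 ∙ z).starProjection x‖ * ‖y‖ ≤
      ‖x - (𝕜 ∙ y).starProjection x‖ * ‖y‖ + ‖x‖ * ‖y - (𝕜 ∙ z).starProjection y‖ := by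
  obtain ⟨a, ha⟩ := Submodule.mem_span_singleton.mp ((𝕜 ∙ y).starProjection_apply_mem x)
  have hdecomp : x - a • (𝕜 ∙ z).starProjection y =
      (x - (𝕜 ∙ y).starProjection x) + a • (y - (𝕜 ∙ z).starProjection y) := by
    rw [← ha, smul_sub]; abel
  have hmem : a • (𝕜 ∙ z).starProjection y ∈ 𝕜 ∙ z :=
    Submodule.smul_mem _ a ((𝕜 ∙ z).starProjection_apply_mem y)
  have ha_le : ‖a‖ * ‖y‖ ≤ ‖x‖ := by
    rw [← norm_smul, ha]; exact (𝕜 ∙ y).norm_starProjection_apply_le x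
  have hstep : ‖x - (𝕜 ∙ z).starProjection x‖ ≤
      ‖x - (𝕜 ∙ y).starProjection x‖ + ‖a‖ * ‖y - (𝕜 ∙ z).starProjection y‖ :=
    calc ‖x - (𝕜 ∙ z).starProjection x‖ ≤ ‖x - a • (𝕜 ∙ z).starProjection y‖ :=
          (𝕜 ∙ z).norm_sub_starProjection_le x hmem
      _ ≤ _ := by rw [hdecomp, ← norm_smul]; exact norm_add_le _ _
  calc ‖x - (𝕜 ∙ z).starProjection x‖ * ‖y‖
      ≤ ‖x - (𝕜 ∙ y).starProjection x‖ * ‖y‖ + ‖a‖ * ‖y‖ * ‖y - (𝕜 ∙ z).starProjection y‖ := by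
        nlinarith [norm_nonneg y]
    _ ≤ _ := by gcongr

end

theorem cdot_eq_inner (u v : Fin 3 → ℂ) : cdot u v = ⟪WithLp.toLp 2 v, WithLp.toLp 2 u⟫_ℂ := by
  simp [cdot, PiLp.inner_apply]

theorem hnorm_eq_norm (u : Fin 3 → ℂ) : hnorm u = ‖WithLp.toLp 2 u‖ := by
  rw [hnorm, cdot_eq_inner, ← RCLike.re_eq_complex_re, inner_self_eq_norm_sq,
    Real.sqrt_sq (norm_nonneg _)]

theorem wedgeSq_eq (u v : Fin 3 → ℂ) :
    wedgeSq u v = ‖WithLp.toLp 2 u‖ ^ 2 * ‖WithLp.toLp 2 v‖ ^ 2 -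
      ‖⟪WithLp.toLp 2 v, WithLp.toLp 2 u⟫_ℂ‖ ^ 2 := by
  rw [wedgeSq, cdot_eq_inner, cdot_eq_inner, cdot_eq_inner, cdot_eq_inner, Complex.sub_re,
    ← RCLike.re_eq_complex_re, inner_mul_symm_re_eq_norm, norm_mul, norm_inner_symm,
    inner_self_eq_norm_sq_to_K, inner_self_eq_norm_sq_to_K]
  norm_cast
  ring

theorem wedgeNorm_eq (u v : Fin 3 → ℂ) :
    wedgeNorm u v = ‖WithLp.toLp 2 u - (ℂ ∙ WithLp.toLp 2 v).starProjection (WithLp.toLp 2 u)‖ *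
      ‖WithLp.toLp 2 v‖ := by
  rw [wedgeNorm, wedgeSq_eq, norm_sub_starProjection_singleton_mul_norm_eq_sqrt]

theorem dE_eq_div {v : Fin 3 → ℂ} (hv : v ≠ 0) (u : Fin 3 → ℂ) :
    dE u v = ‖WithLp.toLp 2 u - (ℂ ∙ WithLp.toLp 2 v).starProjection (WithLp.toLp 2 u)‖ /
      ‖WithLp.toLp 2 u‖ := by
  have hv' : ‖WithLp.toLp 2 v‖ ≠ 0 := by simpa using hv
  rw [dE, wedgeNorm_eq, hnorm_eq_norm, hnorm_eq_norm, mul_div_mul_right _ _ hv']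

/-- `d_E` satisfies the triangle inequality on nonzero vectors. -/
theorem dE_triangle (u v w : Fin 3 → ℂ) (hu : u ≠ 0) (hv : v ≠ 0) (hw : w ≠ 0) :
    dE u w ≤ dE u v + dE v w := by
  set x := WithLp.toLp 2 u
  set y := WithLp.toLp 2 v
  set z := WithLp.toLp 2 w
  have hx : 0 < ‖x‖ := by simpa [x] using hu
  have hy : 0 < ‖y‖ := by simpa [y] using hv
  calc dE u w = ‖x - (ℂ ∙ z).starProjection x‖ * ‖y‖ / (‖x‖ * ‖y‖) := by
        rw [dE_eq_div hw, mul_div_mul_right _ _ hy.ne']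
    _ ≤ (‖x - (ℂ ∙ y).starProjection x‖ * ‖y‖ + ‖x‖ * ‖y - (ℂ ∙ z).starProjection y‖) /
          (‖x‖ * ‖y‖) := by
        gcongr
        exact norm_sub_starProjection_singleton_mul_norm_le x y z
    _ = ‖x - (ℂ ∙ y).starProjection x‖ / ‖x‖ + ‖y - (ℂ ∙ z).starProjection y‖ / ‖y‖ := by
        field_simp
    _ = dE u v + dE v w := by rw [dE_eq_div hv, dE_eq_div hw]
end

section
/- There is a constant C < ∞ such that for all 0 < r ≤ 1 and all u, v ∈ ℂ, |η_u(B(0,r)) − η_v(B(0,r))| ≤ C·|u−v|^{1/2}, where η_u is the Lebesgue measure on the vertical line {u}×ℝ and B(0,r) is the Korányi ball of radius r in the Heisenberg group. -/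
open MeasureTheory

/-- For `u ∈ ℂ`, `ηu B(0,r)` is the Lebesgue measure of the intersection of the vertical
line `{u} × ℝ` with the Korányi ball `B(0,r) = {(z,t) : |z|⁴ + 4t² ≤ r⁴}`. -/
noncomputable def etaBall (u : ℂ) (r : ℝ) : ℝ :=
  (volume {t : ℝ | ‖u‖ ^ 4 + 4 * t ^ 2 ≤ r ^ 4}).toReal

/-! Since `η_u(B(0,r)) = √(r⁴ - min(|u|, r)⁴)` and `√·` is `1/2`-Hölder with constant `1`, it
suffices that `x ↦ min(x, r)⁴` is `4`-Lipschitz on `[0, ∞)` for `r ≤ 1`. -/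

namespace Real

/-- Holds for all real `x, y`, because `√` vanishes on `(-∞, 0]`. -/
theorem sqrt_add_le_add_sqrt (x y : ℝ) : √(x + y) ≤ √x + √y := by
  rcases lt_or_ge x 0 with hx | hx
  · rw [sqrt_eq_zero_of_nonpos hx.le, zero_add]
    exact sqrt_le_sqrt (by linarith)
  rcases lt_or_ge y 0 with hy | hy
  · rw [sqrt_eq_zero_of_nonpos hy.le, add_zero]
    exact sqrt_le_sqrt (by linarith)
  rw [sqrt_le_iff]
  refine ⟨by positivity, ?_⟩
  nlinarith [sq_sqrt hx, sq_sqrt hy, mul_nonneg (sqrt_nonneg x) (sqrt_nonneg y)]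

theorem sqrt_sub_sqrt_le (a b : ℝ) : √a - √b ≤ √|a - b| := by
  have : √a ≤ √b + √(a - b) := by
    simpa only [add_sub_cancel] using sqrt_add_le_add_sqrt b (a - b)
  linarith [sqrt_le_sqrt (le_abs_self (a - b))]

theorem abs_sqrt_sub_sqrt_le (a b : ℝ) : |√a - √b| ≤ √|a - b| :=
  abs_sub_le_iff.2 ⟨sqrt_sub_sqrt_le a b, abs_sub_comm a b ▸ sqrt_sub_sqrt_le b a⟩

end Real

theorem abs_pow_sub_pow_le_of_abs_le_one {α : Type*} [CommRing α] [LinearOrder α]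
    [IsStrictOrderedRing α] {a b : α} (ha : |a| ≤ 1) (hb : |b| ≤ 1) (n : ℕ) :
    |a ^ n - b ^ n| ≤ n * |a - b| := by
  calc |a ^ n - b ^ n| ≤ |a - b| * n * max |a| |b| ^ (n - 1) := abs_pow_sub_pow_le a b n
    _ ≤ |a - b| * n * 1 := by gcongr; exact pow_le_one₀ (by positivity) (max_le ha hb)
    _ = n * |a - b| := by ring

theorem Real.volume_setOf_sq_le (c : ℝ) :
    volume {t : ℝ | t ^ 2 ≤ c} = ENNReal.ofReal (2 * √c) := by
  rcases lt_or_ge c 0 with hc | hc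
  · have : {t : ℝ | t ^ 2 ≤ c} = ∅ :=
      Set.eq_empty_of_forall_notMem fun t ht => by nlinarith [sq_nonneg t, ht.out]
    rw [this, measure_empty, Real.sqrt_eq_zero_of_nonpos hc.le, mul_zero, ENNReal.ofReal_zero]
  · have : {t : ℝ | t ^ 2 ≤ c} = Set.Icc (-√c) √c := by
      ext t; exact Real.sq_le hc
    rw [this, Real.volume_Icc, sub_neg_eq_add, two_mul]

theorem etaBall_eq_sqrt (u : ℂ) (r : ℝ) : etaBall u r = √(r ^ 4 - ‖u‖ ^ 4) := by
  have hset : {t : ℝ | ‖u‖ ^ 4 + 4 * t ^ 2 ≤ r ^ 4} = {t : ℝ | t ^ 2 ≤ (r ^ 4 - ‖u‖ ^ 4) / 4} := by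
    ext t; simp only [Set.mem_ofPred_eq]; constructor <;> intro h <;> linarith
  have hsqrt4 : √(4 : ℝ) = 2 := by
    rw [show (4 : ℝ) = 2 ^ 2 by norm_num, Real.sqrt_sq zero_le_two]
  rw [etaBall, hset, Real.volume_setOf_sq_le, ENNReal.toReal_ofReal (by positivity),
    Real.sqrt_div' _ zero_le_four, hsqrt4, mul_div_cancel₀ _ two_ne_zero]

/-- Replacing `‖u‖` by `min ‖u‖ r` changes nothing: for `‖u‖ ≥ r` both radicands are `≤ 0`. -/
theorem etaBall_eq_sqrt_min (u : ℂ) {r : ℝ} (hr : 0 ≤ r) :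
    etaBall u r = √(r ^ 4 - min ‖u‖ r ^ 4) := by
  rw [etaBall_eq_sqrt]
  rcases le_total ‖u‖ r with h | h
  · rw [min_eq_left h]
  · rw [min_eq_right h, sub_self, Real.sqrt_zero,
      Real.sqrt_eq_zero_of_nonpos (sub_nonpos.2 (pow_le_pow_left₀ hr h 4))]

/-- There is a constant `C < ∞` such that for all `0 < r ≤ 1` and all `u, v ∈ ℂ`,
`|η_u(B(0,r)) − η_v(B(0,r))| ≤ C·|u−v|^{1/2}`. -/
theorem eta_ball_holder :
    ∃ C : ℝ, 0 < C ∧ ∀ r : ℝ, 0 < r → r ≤ 1 → ∀ u v : ℂ,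
      |etaBall u r - etaBall v r| ≤ C * ‖u - v‖ ^ ((1 : ℝ) / 2) := by
  refine ⟨2, two_pos, fun r hr hr1 u v => ?_⟩
  set m := min ‖u‖ r
  set n := min ‖v‖ r
  have hm : |m| ≤ 1 := by
    rw [abs_of_nonneg (le_min (norm_nonneg u) hr.le)]; exact (min_le_right _ _).trans hr1
  have hn : |n| ≤ 1 := by
    rw [abs_of_nonneg (le_min (norm_nonneg v) hr.le)]; exact (min_le_right _ _).trans hr1
  have hmn : |m - n| ≤ ‖u - v‖ :=
    (abs_min_sub_min_le_max _ _ _ _).trans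
      (by simpa only [sub_self, abs_zero, abs_nonneg, max_eq_left] using abs_norm_sub_norm_le u v)
  calc |etaBall u r - etaBall v r| = |√(r ^ 4 - m ^ 4) - √(r ^ 4 - n ^ 4)| := by
        rw [etaBall_eq_sqrt_min u hr.le, etaBall_eq_sqrt_min v hr.le]
    _ ≤ √|m ^ 4 - n ^ 4| := by
        refine (Real.abs_sqrt_sub_sqrt_le _ _).trans_eq ?_
        rw [sub_sub_sub_cancel_left, abs_sub_comm]
    _ ≤ √(2 ^ 2 * ‖u - v‖) := by
        refine Real.sqrt_le_sqrt ((abs_pow_sub_pow_le_of_abs_le_one hm hn 4).trans ?_)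
        norm_num; linarith
    _ = 2 * ‖u - v‖ ^ ((1 : ℝ) / 2) := by
        rw [Real.sqrt_mul' _ (norm_nonneg _), Real.sqrt_sq zero_le_two, Real.sqrt_eq_rpow]
end

section
/- There exist constants c, C > 0 such that for all 0 < δ ≤ r ≤ 0.001 and all z ∈ ℂ, the 1-dimensional Hausdorff measure (arc length) of the intersection of the unit circle S¹ ⊂ ℂ with the annulus A(z,r,δ) = {w ∈ ℂ : r ≤ |w−z| ≤ r+δ} is at most C·δ^{1/2}. -/
/-!
Rotate the centre `z` onto the positive real axis: the point `z / |z| · e^{iθ}` of the circle lies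
in the annulus iff `cos θ` lies in an interval of length `((r + δ)² - r²) / (2|z|) = O(δ)`, and the
parametrisation is `1`-Lipschitz. By Jordan's inequality `cos x - cos y ≥ 2 (y - x)² / π²` for
`0 ≤ x ≤ y ≤ π`, so the angles in `[0, π]` (and likewise in `[-π, 0]`) whose cosine lies in an
interval of length `ℓ` form a set of diameter at most `π √(ℓ / 2)`.
-/

open MeasureTheory Real Set
open scoped ENNReal

lemma two_div_pi_mul_le_sin {u v : ℝ} (hu : 0 ≤ u) (huv : u ≤ v) (hvu : v ≤ π - u) :
    2 / π * u ≤ sin v := by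
  have hπ : 0 ≤ 2 / π := by positivity
  rcases le_total v (π / 2) with hv | hv
  · exact (mul_le_mul_of_nonneg_left huv hπ).trans (mul_le_sin (hu.trans huv) hv)
  · rw [← sin_pi_sub]
    exact (mul_le_mul_of_nonneg_left (by linarith) hπ).trans
      (mul_le_sin (by linarith) (by linarith))

lemma sq_sub_le_cos_sub_cos {x y : ℝ} (hx : 0 ≤ x) (hxy : x ≤ y) (hy : y ≤ π) :
    2 * (y - x) ^ 2 ≤ π ^ 2 * (cos x - cos y) := by
  set u := (y - x) / 2 with hu_def
  set v := (x + y) / 2 with hv_def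
  have hsin_u : 2 / π * u ≤ sin u :=
    two_div_pi_mul_le_sin (by linarith) le_rfl (by linarith)
  have hsin_v : 2 / π * u ≤ sin v :=
    two_div_pi_mul_le_sin (by linarith) (by linarith) (by linarith)
  have hcos : cos x - cos y = 2 * (sin v * sin u) := by
    rw [cos_sub_cos, show (x - y) / 2 = -u by ring, sin_neg]; ring
  have hu : 0 ≤ 2 / π * u := by positivity
  have hπ : π ≠ 0 := pi_ne_zero
  calc 2 * (y - x) ^ 2 = π ^ 2 * (2 * ((2 / π * u) * (2 / π * u))) := by field_simp; ring
    _ ≤ π ^ 2 * (2 * (sin v * sin u)) := by gcongr; exact hu.trans hsin_v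
    _ = π ^ 2 * (cos x - cos y) := by rw [hcos]

lemma abs_sub_le_of_cos_mem_Icc {a b x y : ℝ} (hx : x ∈ Icc 0 π) (hy : y ∈ Icc 0 π)
    (hcx : cos x ∈ Icc a b) (hcy : cos y ∈ Icc a b) : |x - y| ≤ π * √((b - a) / 2) := by
  suffices h : ∀ x y, x ∈ Icc 0 π → y ∈ Icc 0 π → cos x ∈ Icc a b → cos y ∈ Icc a b → x ≤ y →
      y - x ≤ π * √((b - a) / 2) by
    rcases le_total x y with hxy | hxy
    · rw [abs_sub_comm, abs_of_nonneg (by linarith)]; exact h x y hx hy hcx hcy hxy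
    · rw [abs_of_nonneg (by linarith)]; exact h y x hy hx hcy hcx hxy
  intro x y hx hy hcx hcy hxy
  have h := sq_sub_le_cos_sub_cos hx.1 hxy hy.2
  rw [← sqrt_sq (by linarith : 0 ≤ y - x), ← sqrt_sq pi_pos.le, ← sqrt_mul (sq_nonneg _)]
  apply sqrt_le_sqrt
  nlinarith [hcx.2, hcy.1, pi_pos]

lemma volume_Icc_inter_cos_preimage_Icc_le (a b : ℝ) :
    volume (Icc (-π) π ∩ cos ⁻¹' Icc a b) ≤ ENNReal.ofReal (2 * π * √((b - a) / 2)) := by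
  set D := π * √((b - a) / 2) with hD_def
  have hD : 0 ≤ D := by positivity
  have hdiam_nonneg : Metric.ediam (Icc (-π) π ∩ cos ⁻¹' Icc a b ∩ Ici 0) ≤ ENNReal.ofReal D := by
    refine Metric.ediam_le fun x ⟨⟨hx, hcx⟩, hx0⟩ y ⟨⟨hy, hcy⟩, hy0⟩ => (edist_le_ofReal hD).2 ?_
    exact abs_sub_le_of_cos_mem_Icc ⟨hx0, hx.2⟩ ⟨hy0, hy.2⟩ hcx hcy
  have hdiam_nonpos : Metric.ediam (Icc (-π) π ∩ cos ⁻¹' Icc a b ∩ Iic 0) ≤ ENNReal.ofReal D := by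
    refine Metric.ediam_le fun x ⟨⟨hx, hcx⟩, hx0⟩ y ⟨⟨hy, hcy⟩, hy0⟩ => (edist_le_ofReal hD).2 ?_
    have h := abs_sub_le_of_cos_mem_Icc (a := a) (b := b) (x := -x) (y := -y)
      ⟨neg_nonneg.2 hx0, by linarith [hx.1]⟩ ⟨neg_nonneg.2 hy0, by linarith [hy.1]⟩
      ((cos_neg x).symm ▸ hcx) ((cos_neg y).symm ▸ hcy)
    rwa [neg_sub_neg, abs_sub_comm] at h
  calc volume (Icc (-π) π ∩ cos ⁻¹' Icc a b)
      ≤ volume (Icc (-π) π ∩ cos ⁻¹' Icc a b ∩ Ici 0) +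
          volume (Icc (-π) π ∩ cos ⁻¹' Icc a b ∩ Iic 0) := by
        refine (measure_mono fun x hx => ?_).trans (measure_union_le _ _)
        rcases le_total 0 x with h | h
        exacts [Or.inl ⟨hx, h⟩, Or.inr ⟨hx, h⟩]
    _ ≤ ENNReal.ofReal D + ENNReal.ofReal D := by
        gcongr <;> exact (Real.volume_le_diam _).trans ‹_›
    _ = ENNReal.ofReal (2 * π * √((b - a) / 2)) := by
        rw [← ENNReal.ofReal_add hD hD, hD_def]; ring_nf

lemma norm_exp_mul_I_sub_ofReal_sq (θ ρ : ℝ) :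
    ‖Complex.exp (θ * Complex.I) - ρ‖ ^ 2 = 1 + ρ ^ 2 - 2 * ρ * cos θ := by
  rw [Complex.sq_norm, Complex.normSq_apply]
  simp only [Complex.sub_re, Complex.sub_im, Complex.exp_ofReal_mul_I_re,
    Complex.exp_ofReal_mul_I_im, Complex.ofReal_re, Complex.ofReal_im]
  nlinarith [sin_sq_add_cos_sq θ]

lemma norm_div_norm_mul_exp_mul_I_sub_sq {z : ℂ} (hz : z ≠ 0) (θ : ℝ) :
    ‖z / ‖z‖ * Complex.exp (θ * Complex.I) - z‖ ^ 2 = 1 + ‖z‖ ^ 2 - 2 * ‖z‖ * cos θ := by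
  have hz' : (‖z‖ : ℂ) ≠ 0 := by exact_mod_cast norm_ne_zero_iff.2 hz
  have h : z / ‖z‖ * Complex.exp (θ * Complex.I) - z =
      z / ‖z‖ * (Complex.exp (θ * Complex.I) - ‖z‖) := by
    field_simp
  rw [h, norm_mul, show ‖z / ‖z‖‖ = 1 by simp [hz], one_mul, norm_exp_mul_I_sub_ofReal_sq]

lemma lipschitzWith_const_mul_exp_mul_I {ζ : ℂ} (hζ : ‖ζ‖ = 1) :
    LipschitzWith 1 fun θ : ℝ => ζ * Complex.exp (θ * Complex.I) := by
  refine LipschitzWith.of_dist_le_mul fun θ φ => ?_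
  have h := (lipschitzWith_circleMap 0 1).dist_le_mul θ φ
  simp only [circleMap, zero_add, Complex.ofReal_one, one_mul, map_one] at h
  rwa [dist_eq_norm, ← mul_sub, norm_mul, hζ, one_mul, ← dist_eq_norm]

lemma sphere_inter_annulus_subset_image {z : ℂ} (hz : z ≠ 0) {s t : ℝ} (hs : 0 ≤ s) :
    {w : ℂ | ‖w‖ = 1} ∩ {w : ℂ | s ≤ ‖w - z‖ ∧ ‖w - z‖ ≤ t} ⊆
      (fun θ : ℝ => z / ‖z‖ * Complex.exp (θ * Complex.I)) ''
        (Icc (-π) π ∩ cos ⁻¹' Icc ((1 + ‖z‖ ^ 2 - t ^ 2) / (2 * ‖z‖))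
          ((1 + ‖z‖ ^ 2 - s ^ 2) / (2 * ‖z‖))) := by
  rintro w ⟨hw, hsw, hwt⟩
  have hρ : 0 < ‖z‖ := norm_pos_iff.2 hz
  have hζ : ‖z / ‖z‖‖ = 1 := by simp [hz]
  have hζ0 : z / ‖z‖ ≠ 0 := norm_ne_zero_iff.1 (hζ ▸ one_ne_zero)
  set θ := Complex.arg (w / (z / ‖z‖))
  have hw_eq : z / ‖z‖ * Complex.exp (θ * Complex.I) = w := by
    have h := Complex.norm_mul_exp_arg_mul_I (w / (z / ‖z‖))
    rw [norm_div, hw, hζ, div_one, Complex.ofReal_one, one_mul] at h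
    rw [h, mul_div_cancel₀ _ hζ0]
  have hdist := norm_div_norm_mul_exp_mul_I_sub_sq hz θ
  rw [hw_eq] at hdist
  have hlo : s ^ 2 ≤ ‖w - z‖ ^ 2 := pow_le_pow_left₀ hs hsw 2
  have hhi : ‖w - z‖ ^ 2 ≤ t ^ 2 := pow_le_pow_left₀ (norm_nonneg _) hwt 2
  refine ⟨θ, ⟨?_, ?_⟩, hw_eq⟩
  · exact Ioc_subset_Icc_self (Complex.arg_mem_Ioc _)
  · constructor
    · rw [div_le_iff₀ (by positivity)]; linarith
    · rw [le_div_iff₀ (by positivity)]; linarith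

lemma hausdorffMeasure_sphere_inter_annulus_le {z : ℂ} (hz : z ≠ 0) {s t : ℝ} (hs : 0 ≤ s) :
    (μH[1] : Measure ℂ) ({w : ℂ | ‖w‖ = 1} ∩ {w : ℂ | s ≤ ‖w - z‖ ∧ ‖w - z‖ ≤ t}) ≤
      ENNReal.ofReal (2 * π * √((t ^ 2 - s ^ 2) / (4 * ‖z‖))) := by
  have hζ : ‖z / ‖z‖‖ = 1 := by simp [hz]
  have himage := (lipschitzWith_const_mul_exp_mul_I hζ).hausdorffMeasure_image_le zero_le_one
    (Icc (-π) π ∩ cos ⁻¹' Icc ((1 + ‖z‖ ^ 2 - t ^ 2) / (2 * ‖z‖))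
      ((1 + ‖z‖ ^ 2 - s ^ 2) / (2 * ‖z‖)))
  rw [ENNReal.coe_one, ENNReal.one_rpow, one_mul, hausdorffMeasure_real] at himage
  have hwidth : ((1 + ‖z‖ ^ 2 - s ^ 2) / (2 * ‖z‖) - (1 + ‖z‖ ^ 2 - t ^ 2) / (2 * ‖z‖)) / 2 =
      (t ^ 2 - s ^ 2) / (4 * ‖z‖) := by
    ring
  calc _ ≤ _ := measure_mono (sphere_inter_annulus_subset_image hz hs)
    _ ≤ _ := himage
    _ ≤ _ := hwidth ▸ volume_Icc_inter_cos_preimage_Icc_le _ _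

/-- There exists a constant `C > 0` such that for all `0 < δ ≤ r ≤ 0.001` and all `z ∈ ℂ`,
the 1-dimensional Hausdorff measure (arc length) of the intersection of the unit circle
with the annulus `A(z,r,δ) = {w : r ≤ |w−z| ≤ r+δ}` is at most `C·δ^{1/2}`. -/
theorem circle_annulus_length :
    ∃ C : ℝ, 0 < C ∧ ∀ (z : ℂ) (r δ : ℝ), 0 < δ → δ ≤ r → r ≤ 0.001 →
      (μH[1] : Measure ℂ)
          ({w : ℂ | ‖w‖ = 1} ∩
            {w : ℂ | r ≤ ‖w - z‖ ∧ ‖w - z‖ ≤ r + δ})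
        ≤ ENNReal.ofReal (C * δ ^ ((1 : ℝ) / 2)) := by
  refine ⟨7, by norm_num, fun z r δ hδ hδr hr => ?_⟩
  rcases eq_empty_or_nonempty ({w : ℂ | ‖w‖ = 1} ∩
      {w : ℂ | r ≤ ‖w - z‖ ∧ ‖w - z‖ ≤ r + δ}) with hempty | ⟨w, hw, -, hwz⟩
  · simp [hempty]
  have hz : 1 - (r + δ) ≤ ‖z‖ := by
    have h := norm_sub_norm_le w z
    rw [hw] at h; linarith
  have hz0 : z ≠ 0 := norm_pos_iff.1 (by linarith)
  refine (hausdorffMeasure_sphere_inter_annulus_le hz0 (hδ.le.trans hδr)).trans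
    (ENNReal.ofReal_le_ofReal ?_)
  have hwidth : ((r + δ) ^ 2 - r ^ 2) / (4 * ‖z‖) ≤ δ := by
    rw [div_le_iff₀ (by linarith)]; nlinarith
  rw [← sqrt_eq_rpow]
  gcongr
  linarith [pi_lt_d2]
end

section
/- Let x, y be distinct points of S³ (null lines in ℙ²ℂ) and let w = κ(x∧y) ∈ ℂ³ be a representative of the pole of the projective line through x and y, where ⟨κ(u∧v), z⟩·(e₀∧e₁∧e₂) = u∧v∧z. Then ⟨w,w⟩/‖w‖² = −|⟨x,y⟩|²/‖x∧y‖², where ‖·‖ are the norms induced by the standard Hermitian inner product on ℂ³ and Λ²ℂ³. In particular ⟨w,w⟩ < 0, so the projective line through two distinct points of S³ always defines a chain. -/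
/-!
Both Lagrange identities say that `κ` is an isometry: for the signature (1,2) form,
`⟨w,w⟩ = ⟨x,x⟩⟨y,y⟩ − |⟨x,y⟩|² = −|⟨x,y⟩|²` when `x, y` are null, and for the standard
product `‖w‖² = ‖x∧y‖²`. Strict negativity holds because a form of signature (1,2) has no
totally isotropic plane, so `⟨x,y⟩ ≠ 0`.
-/

open scoped ComplexConjugate

/-- Squared Hermitian norm on ℂ³. -/
noncomputable def hnormSq (u : Fin 3 → ℂ) : ℝ := (cdot u u).re

/-- The signature (1,2) Hermitian form. -/
noncomputable def hform (u v : Fin 3 → ℂ) : ℂ :=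
  u 0 * conj (v 0) - u 1 * conj (v 1) - u 2 * conj (v 2)

/-- The map `κ : Λ²ℂ³ → ℂ³` characterized by `⟨κ(x∧y), z⟩·(e₀∧e₁∧e₂) = x∧y∧z`,
written out explicitly in coordinates. -/
noncomputable def kappa (x y : Fin 3 → ℂ) : Fin 3 → ℂ :=
  ![conj (x 1 * y 2 - x 2 * y 1),
    conj (x 0 * y 2 - x 2 * y 0),
    -conj (x 0 * y 1 - x 1 * y 0)]

lemma hform_kappa_self (x y : Fin 3 → ℂ) :
    hform (kappa x y) (kappa x y)
      = hform x x * hform y y - hform x y * hform y x := by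
  simp only [hform, kappa, Matrix.cons_val_zero, Matrix.cons_val_one, Matrix.head_cons,
    Matrix.cons_val_two, Matrix.tail_cons, map_sub, map_mul, map_neg, Complex.conj_conj,
    neg_mul, mul_neg, neg_neg]
  ring

lemma cdot_kappa_self (x y : Fin 3 → ℂ) :
    cdot (kappa x y) (kappa x y) = cdot x x * cdot y y - cdot x y * cdot y x := by
  simp only [cdot, Fin.sum_univ_three, kappa, Matrix.cons_val_zero, Matrix.cons_val_one,
    Matrix.head_cons, Matrix.cons_val_two, Matrix.tail_cons, map_sub, map_mul, map_neg,
    Complex.conj_conj, neg_mul, mul_neg, neg_neg]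
  ring

lemma hnormSq_kappa (x y : Fin 3 → ℂ) : hnormSq (kappa x y) = wedgeSq x y := by
  rw [hnormSq, wedgeSq, cdot_kappa_self]

lemma hform_swap (x y : Fin 3 → ℂ) : hform y x = conj (hform x y) := by
  simp only [hform, map_sub, map_mul, Complex.conj_conj]
  ring

lemma hform_smul_add_smul_self (a b : ℂ) (x y : Fin 3 → ℂ) :
    hform (a • x + b • y) (a • x + b • y)
      = a * conj a * hform x x + a * conj b * hform x y
        + b * conj a * hform y x + b * conj b * hform y y := by
  simp only [hform, Pi.add_apply, Pi.smul_apply, smul_eq_mul, map_add, map_mul]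
  ring

lemma eq_zero_of_hform_self_eq_zero_of_apply_zero {z : Fin 3 → ℂ} (h : hform z z = 0)
    (h0 : z 0 = 0) : z = 0 := by
  have hsum : ((Complex.normSq (z 1) + Complex.normSq (z 2) : ℝ) : ℂ) = 0 := by
    push_cast
    rw [← Complex.mul_conj, ← Complex.mul_conj]
    simp only [hform, h0] at h
    linear_combination -h
  have hsum' : Complex.normSq (z 1) + Complex.normSq (z 2) = 0 := by exact_mod_cast hsum
  have h1 : z 1 = 0 := Complex.normSq_eq_zero.mp
    (by linarith [Complex.normSq_nonneg (z 1), Complex.normSq_nonneg (z 2)])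
  have h2 : z 2 = 0 := Complex.normSq_eq_zero.mp
    (by linarith [Complex.normSq_nonneg (z 1), Complex.normSq_nonneg (z 2)])
  funext i
  fin_cases i <;> simp [h0, h1, h2]

/-- If `⟨x,y⟩ = 0`, then `y₀ x − x₀ y` is null with vanishing first coordinate, hence zero. -/
lemma hform_ne_zero_of_linearIndependent {x y : Fin 3 → ℂ}
    (hx : hform x x = 0) (hy : hform y y = 0)
    (hind : LinearIndependent ℂ ![x, y]) : hform x y ≠ 0 := by
  intro hxy
  have hyx : hform y x = 0 := by rw [hform_swap, hxy, map_zero]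
  have hd0 : (y 0 • x + (-x 0) • y) 0 = 0 := by
    simp only [Pi.add_apply, Pi.smul_apply, smul_eq_mul]
    ring
  have hdd : hform (y 0 • x + (-x 0) • y) (y 0 • x + (-x 0) • y) = 0 := by
    rw [hform_smul_add_smul_self, hx, hy, hxy, hyx]
    ring
  obtain ⟨-, hx0⟩ := LinearIndependent.pair_iff.mp hind _ _
    (eq_zero_of_hform_self_eq_zero_of_apply_zero hdd hd0)
  have hx_zero : x = 0 := eq_zero_of_hform_self_eq_zero_of_apply_zero hx (neg_eq_zero.mp hx0)
  exact hind.ne_zero 0 (by simp [hx_zero])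

lemma re_hform_kappa_self {x y : Fin 3 → ℂ} (hx : hform x x = 0) (hy : hform y y = 0) :
    (hform (kappa x y) (kappa x y)).re = -‖hform x y‖ ^ 2 := by
  rw [hform_kappa_self, hx, hy, hform_swap x y, zero_mul, zero_sub, Complex.mul_conj,
    Complex.neg_re, Complex.ofReal_re, Complex.normSq_eq_norm_sq]

/-- For distinct points `x, y` of `S³` (null, linearly independent) and `w = κ(x∧y)`
(a representative of the pole of the projective line through `x` and `y`):
`⟨w,w⟩/‖w‖² = −|⟨x,y⟩|²/‖x∧y‖²`; in particular `⟨w,w⟩ < 0`, so the projective line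
through two distinct points of `S³` always defines a chain. -/
theorem pole_negative (x y : Fin 3 → ℂ)
    (hx : hform x x = 0) (hy : hform y y = 0)
    (hind : LinearIndependent ℂ ![x, y]) :
    (hform (kappa x y) (kappa x y)).re / hnormSq (kappa x y)
        = -(‖hform x y‖) ^ 2 / wedgeSq x y ∧
      (hform (kappa x y) (kappa x y)).re < 0 := by
  rw [re_hform_kappa_self hx hy, hnormSq_kappa]
  have hpos : 0 < ‖hform x y‖ := norm_pos_iff.mpr (hform_ne_zero_of_linearIndependent hx hy hind)
  exact ⟨rfl, neg_neg_of_pos (pow_pos hpos 2)⟩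
end

section
/- Fix w = [1 : w₁ : w₂] ∈ ℙ²ℂ with κ² := |w₁|² + |w₂|² > 1 and set υ = sqrt(κ² − 1). Then the map θ ↦ y_θ = [κ² : y₁ : y₂] with (y₁,y₂) = (w₁,w₂) + υ·e^{iθ}·(−\overline{w₂}, \overline{w₁}) is a parametrization of the chain L = w^⊥ ∩ S³: for every θ, ⟨y_θ, w⟩ = 0 and ⟨y_θ, y_θ⟩ = 0 (i.e. y_θ lies on S³ and on w^⊥). -/
open scoped ComplexConjugate

/-! The vector `(-conj w₂, conj w₁)` is orthogonal to `(w₁, w₂)` for the standard Hermitian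
product and has the same length `κ`. Hence `⟨y_θ, w⟩ = κ² - κ² = 0`, and by Pythagoras
`⟨y_θ, y_θ⟩ = κ⁴ - (1 + υ²) κ² = 0` because `|υ e^{iθ}|² = υ² = κ² - 1`. -/

@[simp]
lemma hform_vec (a₀ a₁ a₂ b₀ b₁ b₂ : ℂ) :
    hform ![a₀, a₁, a₂] ![b₀, b₁, b₂] = a₀ * conj b₀ - a₁ * conj b₁ - a₂ * conj b₂ :=
  rfl

lemma hform_add_mul_orth_base (z c w₁ w₂ : ℂ) :
    hform ![z, w₁ + c * -conj w₂, w₂ + c * conj w₁] ![1, w₁, w₂] =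
      z - (‖w₁‖ ^ 2 + ‖w₂‖ ^ 2 : ℝ) := by
  simp only [hform_vec, map_one, Complex.ofReal_add, Complex.ofReal_pow]
  linear_combination (-1 : ℂ) * Complex.mul_conj' w₁ - Complex.mul_conj' w₂

lemma hform_add_mul_orth_self (z c w₁ w₂ : ℂ) :
    hform ![z, w₁ + c * -conj w₂, w₂ + c * conj w₁] ![z, w₁ + c * -conj w₂, w₂ + c * conj w₁] =
      ((‖z‖ ^ 2 - (1 + ‖c‖ ^ 2) * (‖w₁‖ ^ 2 + ‖w₂‖ ^ 2) : ℝ) : ℂ) := by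
  simp only [hform_vec, map_add, map_mul, map_neg, Complex.conj_conj]
  push_cast
  have h₁ := Complex.mul_conj' w₁
  have h₂ := Complex.mul_conj' w₂
  have hc := Complex.mul_conj' c
  linear_combination Complex.mul_conj' z - (1 + c * conj c) * (h₁ + h₂)
    - (‖w₁‖ ^ 2 + ‖w₂‖ ^ 2 : ℂ) * hc

/-- The parametrization `θ ↦ y_θ = (κ², (w₁,w₂) + υ e^{iθ}(−conj w₂, conj w₁))` of the
chain `w^⊥ ∩ S³` for `w = [1:w₁:w₂]`, `κ² = |w₁|²+|w₂|² > 1`, `υ = sqrt(κ²−1)`: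
each `y_θ` lies on `w^⊥` and on `S³`. -/
theorem chain_parametrization (w₁ w₂ : ℂ) (θ : ℝ)
    (hκ : 1 < ‖w₁‖ ^ 2 + ‖w₂‖ ^ 2) :
    hform
        ![((‖w₁‖ ^ 2 + ‖w₂‖ ^ 2 : ℝ) : ℂ),
          w₁ + (Real.sqrt (‖w₁‖ ^ 2 + ‖w₂‖ ^ 2 - 1) : ℂ)
              * Complex.exp (θ * Complex.I) * (-(conj w₂)),
          w₂ + (Real.sqrt (‖w₁‖ ^ 2 + ‖w₂‖ ^ 2 - 1) : ℂ)
              * Complex.exp (θ * Complex.I) * conj w₁]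
        ![1, w₁, w₂] = 0 ∧
    hform
        ![((‖w₁‖ ^ 2 + ‖w₂‖ ^ 2 : ℝ) : ℂ),
          w₁ + (Real.sqrt (‖w₁‖ ^ 2 + ‖w₂‖ ^ 2 - 1) : ℂ)
              * Complex.exp (θ * Complex.I) * (-(conj w₂)),
          w₂ + (Real.sqrt (‖w₁‖ ^ 2 + ‖w₂‖ ^ 2 - 1) : ℂ)
              * Complex.exp (θ * Complex.I) * conj w₁]
        ![((‖w₁‖ ^ 2 + ‖w₂‖ ^ 2 : ℝ) : ℂ),
          w₁ + (Real.sqrt (‖w₁‖ ^ 2 + ‖w₂‖ ^ 2 - 1) : ℂ)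
              * Complex.exp (θ * Complex.I) * (-(conj w₂)),
          w₂ + (Real.sqrt (‖w₁‖ ^ 2 + ‖w₂‖ ^ 2 - 1) : ℂ)
              * Complex.exp (θ * Complex.I) * conj w₁] = 0 := by
  set κsq := ‖w₁‖ ^ 2 + ‖w₂‖ ^ 2
  have hc : ‖(Real.sqrt (κsq - 1) : ℂ) * Complex.exp (θ * Complex.I)‖ ^ 2 = κsq - 1 := by
    rw [norm_mul, Complex.norm_exp_ofReal_mul_I, Complex.norm_real, Real.norm_eq_abs, mul_one,
      sq_abs, Real.sq_sqrt (by linarith)]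
  refine ⟨?_, ?_⟩
  · rw [hform_add_mul_orth_base, sub_self]
  · rw [hform_add_mul_orth_self, hc, Complex.norm_real, Real.norm_eq_abs, sq_abs]
    exact_mod_cast (by ring : κsq ^ 2 - (1 + (κsq - 1)) * κsq = 0)
end

section
/- With the parametrization y_θ of the chain w^⊥ ∩ S³ (where w = [1:w₁:w₂], κ² = |w₁|²+|w₂|² > 1, υ = sqrt(κ²−1), y_θ = [κ² : (w₁,w₂) + υe^{iθ}(−\overline{w₂},\overline{w₁})]) and x = [1:1:0] ∈ S³, the visual distance satisfies d(x, y_θ)² = (|w₂|·υ)/(2κ²) · |e^{iθ} − z|, where z = (w₁ − κ²)/(\overline{w₂}·υ), assuming w₂ ≠ 0. -/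
/-! The vector `(-conj w₂, conj w₁)` is orthogonal to `(w₁, w₂)` for the standard Hermitian product,
so `|y₁|² + |y₂|² = (1 + υ²) κ² = κ⁴ = |y₀|²`: `y_θ` is null, whence `‖y_θ‖ = √2 κ²`. The pairing
`⟨x, y_θ⟩` is the conjugate of `y₀ - y₁ = conj w₂ υ e^{iθ} - (w₁ - κ²)`, whose modulus is
`|w₂| υ |e^{iθ} - z|`. -/

open scoped ComplexConjugate

/-- The visual distance `d(u,v) = sqrt(|⟨u,v⟩|/(‖u‖‖v‖))` on representatives. -/
noncomputable def vd (u v : Fin 3 → ℂ) : ℝ :=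
  Real.sqrt (‖hform u v‖ / (hnorm u * hnorm v))

lemma vd_sq (u v : Fin 3 → ℂ) : vd u v ^ 2 = ‖hform u v‖ / (hnorm u * hnorm v) :=
  Real.sq_sqrt (by unfold hnorm; positivity)

lemma hform_self (v : Fin 3 → ℂ) :
    hform v v = ((‖v 0‖ ^ 2 - ‖v 1‖ ^ 2 - ‖v 2‖ ^ 2 : ℝ) : ℂ) := by
  simp only [hform, Complex.mul_conj, Complex.normSq_eq_norm_sq]
  push_cast
  ring

lemma cdot_self (v : Fin 3 → ℂ) :
    cdot v v = ((‖v 0‖ ^ 2 + ‖v 1‖ ^ 2 + ‖v 2‖ ^ 2 : ℝ) : ℂ) := by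
  simp only [cdot, Fin.sum_univ_three, Complex.mul_conj, Complex.normSq_eq_norm_sq]
  push_cast
  ring

lemma hnorm_eq_of_hform_self_eq_zero {v : Fin 3 → ℂ} (h : hform v v = 0) :
    hnorm v = √2 * ‖v 0‖ := by
  rw [hform_self, Complex.ofReal_eq_zero] at h
  have hsum : ‖v 0‖ ^ 2 + ‖v 1‖ ^ 2 + ‖v 2‖ ^ 2 = 2 * ‖v 0‖ ^ 2 := by linarith
  rw [hnorm, cdot_self, Complex.ofReal_re, hsum, Real.sqrt_mul zero_le_two,
    Real.sqrt_sq (norm_nonneg _)]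

lemma hform_one_one_zero (v : Fin 3 → ℂ) : hform ![1, 1, 0] v = conj (v 0 - v 1) := by
  simp [hform]

lemma hnorm_one_one_zero : hnorm ![1, 1, 0] = √2 := by
  simp [hnorm, cdot_self, one_add_one_eq_two]

lemma norm_sq_add_norm_sq_chain (w₁ w₂ c : ℂ) :
    ‖w₁ + c * -conj w₂‖ ^ 2 + ‖w₂ + c * conj w₁‖ ^ 2
      = (1 + ‖c‖ ^ 2) * (‖w₁‖ ^ 2 + ‖w₂‖ ^ 2) := by
  simp only [← Complex.normSq_eq_norm_sq, Complex.normSq_apply]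
  simp only [mul_neg, Complex.add_re, Complex.neg_re, Complex.mul_re, Complex.conj_re,
    Complex.conj_im, Complex.add_im, Complex.neg_im, Complex.mul_im]
  ring

lemma norm_mul_sub_eq_norm_mul_norm_sub_div {𝕜 : Type*} [NormedField 𝕜] {b : 𝕜} (hb : b ≠ 0)
    (a e : 𝕜) : ‖b * e - a‖ = ‖b‖ * ‖e - a / b‖ := by
  rw [← norm_mul, mul_sub, mul_div_cancel₀ _ hb]

/-- With the parametrization `y_θ` of the chain `w^⊥ ∩ S³` and `x = [1:1:0] ∈ S³`:
`d(x, y_θ)² = (|w₂|·υ)/(2κ²) · |e^{iθ} − z|` where `z = (w₁ − κ²)/(conj w₂ · υ)`. -/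
theorem visual_dist_on_chain (w₁ w₂ : ℂ) (θ : ℝ)
    (hκ : 1 < ‖w₁‖ ^ 2 + ‖w₂‖ ^ 2) (hw₂ : w₂ ≠ 0)
    (κsq υ : ℝ) (hκsq : κsq = ‖w₁‖ ^ 2 + ‖w₂‖ ^ 2)
    (hυ : υ = Real.sqrt (κsq - 1))
    (y : Fin 3 → ℂ)
    (hy : y = ![(κsq : ℂ),
        w₁ + (υ : ℂ) * Complex.exp (θ * Complex.I) * (-(conj w₂)),
        w₂ + (υ : ℂ) * Complex.exp (θ * Complex.I) * conj w₁])
    (z : ℂ) (hz : z = (w₁ - (κsq : ℂ)) / (conj w₂ * (υ : ℂ))) :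
    vd ![1, 1, 0] y ^ 2
      = (‖w₂‖ * υ) / (2 * κsq)
          * ‖Complex.exp (θ * Complex.I) - z‖ := by
  set e := Complex.exp (θ * Complex.I)
  have hκsq_gt : 1 < κsq := hκsq ▸ hκ
  have hυ_pos : 0 < υ := hυ ▸ Real.sqrt_pos.2 (by linarith)
  have hυe : ‖(υ : ℂ) * e‖ ^ 2 = κsq - 1 := by
    rw [norm_mul, Complex.norm_exp_ofReal_mul_I, Complex.norm_real, Real.norm_of_nonneg hυ_pos.le,
      mul_one, hυ, Real.sq_sqrt (by linarith)]
  have hy_null : hform y y = 0 := by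
    simp only [hform_self, hy, Matrix.cons_val_zero, Matrix.cons_val_one, Matrix.cons_val_two,
      Matrix.tail_cons, Matrix.head_cons, Complex.ofReal_eq_zero]
    rw [sub_sub, norm_sq_add_norm_sq_chain, hυe, ← hκsq, Complex.norm_real, Real.norm_eq_abs, sq_abs]
    ring
  have hy_sub : y 0 - y 1 = conj w₂ * υ * e - (w₁ - κsq) := by
    simp only [hy, Matrix.cons_val_zero, Matrix.cons_val_one]
    ring
  have hxy : ‖hform ![1, 1, 0] y‖ = ‖w₂‖ * υ * ‖e - z‖ := by
    rw [hform_one_one_zero, Complex.norm_conj, hy_sub, hz,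
      norm_mul_sub_eq_norm_mul_norm_sub_div (by simp [hw₂, hυ_pos.ne'])]
    simp [hυ_pos.le]
  rw [vd_sq, hxy, hnorm_one_one_zero, hnorm_eq_of_hform_self_eq_zero hy_null]
  have hy₀ : ‖y 0‖ = κsq := by
    rw [hy, Matrix.cons_val_zero, Complex.norm_real, Real.norm_of_nonneg (by linarith)]
  rw [hy₀, ← mul_assoc, Real.mul_self_sqrt zero_le_two]
  field_simp
end
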